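/- arXiv:math/0610288 — 9 statements merged into one kernel-verified Lean document; each statement's English description precedes it below -/
import Mathlib

section
/- For all Z₁, Z₂, z₁ ∈ ℂ, setting z₂ = exp(Z₁·conj(z₁))·z₁, one has exp((Z₁ + exp(conj(Z₁)·z₁)·Z₂)·conj(z₁))·z₁ = exp(Z₂·conj(z₂))·z₂. In other words, in Dazord's groupoid the target of the product (Z₁,z₁)·(Z₂,z₂) = (Z₁ + exp(conj(Z₁)·z₁)·Z₂, z₁) equals the target of (Z₂,z₂) whenever z₂ = t(Z₁,z₁). -/
open Complex ComplexConjugate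

theorem conj_exp_mul_conj_mul (Z z : ℂ) :
    conj (exp (Z * conj z) * z) = exp (conj Z * z) * conj z := by
  rw [map_mul, ← exp_conj, map_mul, conj_conj]

/-- The target map is unchanged by the product because conjugating `z₂ = t(Z₁,z₁)` produces exactly
the factor `exp(conj Z₁·z₁)` by which the product rescales `Z₂`. -/
theorem dazord_target_of_mul (Z₁ Z₂ z₁ z₂ : ℂ)
    (hz₂ : z₂ = exp (Z₁ * (starRingEnd ℂ) z₁) * z₁) :
    exp ((Z₁ + exp ((starRingEnd ℂ) Z₁ * z₁) * Z₂) * (starRingEnd ℂ) z₁) * z₁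
      = exp (Z₂ * (starRingEnd ℂ) z₂) * z₂ := by
  rw [hz₂, conj_exp_mul_conj_mul, add_mul, exp_add, mul_assoc (exp _) Z₂, mul_left_comm Z₂]
  ring
end

section
/- For all Z₁, Z₂, z₁ ∈ ℂ, setting z₂ = exp(Z₁·conj(z₁))·z₁, one has exp(conj(Z₁ + exp(conj(Z₁)·z₁)·Z₂)·z₁) = exp(conj(Z₁)·z₁)·exp(conj(Z₂)·z₂). Consequently the product of Dazord's groupoid is associative: for composable triples (Z₁,z₁), (Z₂,z₂), (Z₃,z₃) (i.e. z₂ = t(Z₁,z₁) and z₃ = t(Z₂,z₂)), ((Z₁,z₁)·(Z₂,z₂))·(Z₃,z₃) = (Z₁,z₁)·((Z₂,z₂)·(Z₃,z₃)). -/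
/-!
Since `conj (exp (conj Z₁ · z₁)) = exp (Z₁ · conj z₁)` is the factor in the target map, the
exponent `conj Z · z` is additive along composable pairs, so `exp (conj Z · z)` is
multiplicative; associativity of the first coordinate is then the distributive law.
-/

open Complex

/-- The product of Dazord's groupoid: `(Z₁,z₁)·(Z₂,z₂) = (Z₁ + exp(conj Z₁·z₁)·Z₂, z₁)`. -/
noncomputable def dazordMul (p q : ℂ × ℂ) : ℂ × ℂ :=
  (p.1 + exp ((starRingEnd ℂ) p.1 * p.2) * q.1, p.2)

/-- The target map of Dazord's groupoid: `t(Z,z) = exp(Z·conj z)·z`. -/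
noncomputable def dazordTarget (p : ℂ × ℂ) : ℂ :=
  exp (p.1 * (starRingEnd ℂ) p.2) * p.2

def dazordPhase (p : ℂ × ℂ) : ℂ :=
  (starRingEnd ℂ) p.1 * p.2

theorem dazordPhase_dazordMul (p q : ℂ × ℂ) (h : q.2 = dazordTarget p) :
    dazordPhase (dazordMul p q) = dazordPhase p + dazordPhase q := by
  simp only [dazordPhase, dazordMul, h, dazordTarget, map_add, map_mul, ← exp_conj,
    conj_conj]
  ring

theorem exp_dazordPhase_dazordMul (p q : ℂ × ℂ) (h : q.2 = dazordTarget p) :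
    exp (dazordPhase (dazordMul p q)) = exp (dazordPhase p) * exp (dazordPhase q) := by
  rw [dazordPhase_dazordMul p q h, exp_add]

theorem dazordMul_fst (p q : ℂ × ℂ) : (dazordMul p q).1 = p.1 + exp (dazordPhase p) * q.1 :=
  rfl

theorem dazordMul_assoc (p q r : ℂ × ℂ) (h : q.2 = dazordTarget p) :
    dazordMul (dazordMul p q) r = dazordMul p (dazordMul q r) := by
  ext
  · simp only [dazordMul_fst, exp_dazordPhase_dazordMul p q h]
    ring
  · rfl

theorem dazord_mul_assoc_general (Z₁ Z₂ Z₃ z₁ z₂ z₃ : ℂ)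
    (h₂ : z₂ = dazordTarget (Z₁, z₁)) :
    exp ((starRingEnd ℂ) (Z₁ + exp ((starRingEnd ℂ) Z₁ * z₁) * Z₂) * z₁)
        = exp ((starRingEnd ℂ) Z₁ * z₁) * exp ((starRingEnd ℂ) Z₂ * z₂) ∧
      dazordMul (dazordMul (Z₁, z₁) (Z₂, z₂)) (Z₃, z₃)
        = dazordMul (Z₁, z₁) (dazordMul (Z₂, z₂) (Z₃, z₃)) :=
  ⟨exp_dazordPhase_dazordMul (Z₁, z₁) (Z₂, z₂) h₂, dazordMul_assoc _ _ _ h₂⟩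

/-- For `z₂ = t(Z₁,z₁)` one has
`exp(conj(Z₁ + exp(conj Z₁·z₁)·Z₂)·z₁) = exp(conj Z₁·z₁)·exp(conj Z₂·z₂)`, and
consequently Dazord's product is associative on composable triples. -/
theorem dazord_mul_assoc (Z₁ Z₂ Z₃ z₁ z₂ z₃ : ℂ)
    (h₂ : z₂ = dazordTarget (Z₁, z₁)) (h₃ : z₃ = dazordTarget (Z₂, z₂)) :
    exp ((starRingEnd ℂ) (Z₁ + exp ((starRingEnd ℂ) Z₁ * z₁) * Z₂) * z₁)
        = exp ((starRingEnd ℂ) Z₁ * z₁) * exp ((starRingEnd ℂ) Z₂ * z₂) ∧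
      dazordMul (dazordMul (Z₁, z₁) (Z₂, z₂)) (Z₃, z₃)
        = dazordMul (Z₁, z₁) (dazordMul (Z₂, z₂) (Z₃, z₃)) :=
  dazord_mul_assoc_general Z₁ Z₂ Z₃ z₁ z₂ z₃ h₂
end

section
/- For all Z, z ∈ ℂ, the element ι(Z,z) := (−exp(−conj(Z)·z)·Z, exp(Z·conj(z))·z) is a two-sided inverse of (Z,z) in Dazord's groupoid: (i) t(ι(Z,z)) = z, i.e. exp(−exp(−conj(Z)·z)·Z·conj(exp(Z·conj(z))·z))·exp(Z·conj(z))·z = z; (ii) Z + exp(conj(Z)·z)·(−exp(−conj(Z)·z)·Z) = 0, so (Z,z)·ι(Z,z) = (0,z); and (iii) −exp(−conj(Z)·z)·Z + exp(conj(−exp(−conj(Z)·z)·Z)·exp(Z·conj(z))·z)·Z = 0, so ι(Z,z)·(Z,z) = (0, exp(Z·conj(z))·z). -/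
open Complex ComplexConjugate

/-! Conjugation commutes with `exp`, so the first component `-exp (-(conj Z * z)) * Z` of the
inverse, paired with the target `exp (Z * conj z) * z`, reproduces the exponent `Z * conj z` (or
its conjugate) with a minus sign; every identity then reduces to `exp (-w) * exp w = 1`. -/

lemma exp_neg_mul_exp (w : ℂ) : exp (-w) * exp w = 1 := by
  rw [← exp_add, neg_add_cancel, exp_zero]

lemma neg_exp_neg_mul_mul_conj_target (Z z : ℂ) :
    -exp (-(conj Z * z)) * Z * conj (exp (Z * conj z) * z) = -(Z * conj z) := by
  simp only [map_mul, ← exp_conj, conj_conj]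
  linear_combination (-(Z * conj z)) * exp_neg_mul_exp (conj Z * z)

lemma conj_neg_exp_neg_mul_mul_target (Z z : ℂ) :
    conj (-exp (-(conj Z * z)) * Z) * (exp (Z * conj z) * z) = -(conj Z * z) := by
  simp only [map_mul, map_neg, ← exp_conj, conj_conj]
  linear_combination (-(conj Z * z)) * exp_neg_mul_exp (Z * conj z)

/-- The element `ι(Z,z) = (−exp(−conj Z·z)·Z, exp(Z·conj z)·z)` is a two-sided inverse
of `(Z,z)` in Dazord's groupoid:
(i) its target is `z`; (ii) `(Z,z)·ι(Z,z)` has first component `0`;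
(iii) `ι(Z,z)·(Z,z)` has first component `0`. -/
theorem dazord_inverse (Z z : ℂ) :
    (exp (-exp (-((starRingEnd ℂ) Z * z)) * Z *
          (starRingEnd ℂ) (exp (Z * (starRingEnd ℂ) z) * z)) *
        (exp (Z * (starRingEnd ℂ) z) * z) = z) ∧
    (Z + exp ((starRingEnd ℂ) Z * z) * (-exp (-((starRingEnd ℂ) Z * z)) * Z) = 0) ∧
    (-exp (-((starRingEnd ℂ) Z * z)) * Z +
        exp ((starRingEnd ℂ) (-exp (-((starRingEnd ℂ) Z * z)) * Z) *
          (exp (Z * (starRingEnd ℂ) z) * z)) * Z = 0) := by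
  refine ⟨?_, ?_, ?_⟩
  · rw [neg_exp_neg_mul_mul_conj_target, ← mul_assoc, exp_neg_mul_exp, one_mul]
  · linear_combination (-Z) * exp_neg_mul_exp (conj Z * z)
  · rw [conj_neg_exp_neg_mul_mul_target]
    ring
end

section
/- For every Z ∈ ℂ and λ ∈ ℝ there exist unique real numbers a, b, M such that (λ : ℂ) = b·exp(M·b) and Complex.I·a = Z·exp(M·b) + M. (Explicitly, b = λ·exp(Re(Z)·λ), M = −Re(Z)·exp(−Re(Z)·λ), a = Im(Z)·exp(−Re(Z)·λ).) -/
/-!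
Since `M * b` is real, `E = exp (M * b)` is a real scale, and splitting into real and imaginary
parts turns the system into `λ = b E`, `M = -Re Z · E`, `a = Im Z · E`. These force
`M * b = -Re Z · λ`, so `E = exp (-Re Z · λ)` is determined by the data, and with it `a`, `b`, `M`.
-/

open Complex in
lemma normalForm_system_iff_real (Z : ℂ) (lam a b M : ℝ) :
    ((lam : ℂ) = b * exp (M * b) ∧ I * a = Z * exp (M * b) + M) ↔
      lam = b * Real.exp (M * b) ∧ M = -Z.re * Real.exp (M * b) ∧
        a = Z.im * Real.exp (M * b) := by
  have hexp : exp (M * b) = (Real.exp (M * b) : ℂ) := by rw [ofReal_exp, ofReal_mul]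
  rw [hexp, Complex.ext_iff (z := I * a)]
  generalize Real.exp (M * b) = E
  simp only [mul_re, mul_im, add_re, add_im, ofReal_re, ofReal_im, I_re, I_im, ← ofReal_mul,
    ofReal_inj, zero_mul, one_mul, mul_zero, sub_zero, add_zero, zero_add]
  constructor
  · rintro ⟨hlam, hre, him⟩
    exact ⟨hlam, by linarith, by linarith⟩
  · rintro ⟨hlam, hM, ha⟩
    exact ⟨hlam, by linarith, ha⟩

lemma real_normalForm_system_iff (x y lam a b M : ℝ) :
    (lam = b * Real.exp (M * b) ∧ M = -x * Real.exp (M * b) ∧ a = y * Real.exp (M * b)) ↔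
      b = lam * Real.exp (x * lam) ∧ M = -x * Real.exp (-(x * lam)) ∧
        a = y * Real.exp (-(x * lam)) := by
  have hinv : Real.exp (-(x * lam)) * Real.exp (x * lam) = 1 := by
    rw [← Real.exp_add, neg_add_cancel, Real.exp_zero]
  constructor
  · rintro ⟨hlam, hM, ha⟩
    have hMb : M * b = -(x * lam) := by rw [hM, hlam]; ring
    rw [hMb] at hlam hM ha
    exact ⟨by linear_combination (-Real.exp (x * lam)) * hlam - b * hinv, hM, ha⟩
  · rintro ⟨hb, hM, ha⟩
    have hMb : M * b = -(x * lam) := by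
      rw [hM, hb]; linear_combination (-(x * lam)) * hinv
    rw [hMb]
    refine ⟨?_, hM, ha⟩
    rw [hb, mul_assoc, mul_comm (Real.exp _), hinv, mul_one]

/-- Every class in the quotient `Z(R⁽⁰⁾)` of Dazord's groupoid has a unique normal form:
for every `Z ∈ ℂ` and `λ ∈ ℝ` there exist unique reals `a, b, M` with
`(λ : ℂ) = b·exp(M·b)` and `I·a = Z·exp(M·b) + M`. -/
theorem dazord_quotient_normal_form (Z : ℂ) (lam : ℝ) :
    ∃! p : ℝ × ℝ × ℝ,
      (lam : ℂ) = (p.2.1 : ℂ) * Complex.exp ((p.2.2 : ℂ) * (p.2.1 : ℂ)) ∧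
        Complex.I * (p.1 : ℂ) =
          Z * Complex.exp ((p.2.2 : ℂ) * (p.2.1 : ℂ)) + (p.2.2 : ℂ) := by
  have hsolve : ∀ a b M : ℝ,
      ((lam : ℂ) = b * Complex.exp (M * b) ∧ Complex.I * a = Z * Complex.exp (M * b) + M) ↔
        b = lam * Real.exp (Z.re * lam) ∧ M = -Z.re * Real.exp (-(Z.re * lam)) ∧
          a = Z.im * Real.exp (-(Z.re * lam)) := fun a b M => by
    rw [normalForm_system_iff_real, real_normalForm_system_iff]
  refine ⟨(Z.im * Real.exp (-(Z.re * lam)), lam * Real.exp (Z.re * lam),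
      -Z.re * Real.exp (-(Z.re * lam))), (hsolve _ _ _).mpr ⟨rfl, rfl, rfl⟩, ?_⟩
  rintro ⟨a, b, M⟩ h
  obtain ⟨rfl, rfl, rfl⟩ := (hsolve a b M).mp h
  rfl
end

section
/- Let φ₁(a,b) = b·cos(a·b) and φ₂(a,b) = b·sin(a·b) for (a,b) ∈ ℝ². Then for all a, b ∈ ℝ: (∂φ₂/∂a)(a,b)·(∂φ₁/∂b)(a,b) − (∂φ₁/∂a)(a,b)·(∂φ₂/∂b)(a,b) = b², and moreover φ₁(a,b)² + φ₂(a,b)² = b². (Thus the pullback under φ = (φ₁,φ₂) of the function x² + y² equals the Poisson bracket of the components of φ for the canonical symplectic bracket on ℝ²; i.e. φ is a Poisson map onto (ℝ², {x,y} = x²+y²).) -/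
open Real

lemma deriv_const_mul_sin_mul_const (c k x : ℝ) :
    deriv (fun t => c * sin (t * k)) x = c * k * cos (x * k) :=
  ((((hasDerivAt_id' x).mul_const k).sin).const_mul c).deriv.trans (by ring)

lemma deriv_const_mul_cos_mul_const (c k x : ℝ) :
    deriv (fun t => c * cos (t * k)) x = -(c * k * sin (x * k)) :=
  ((((hasDerivAt_id' x).mul_const k).cos).const_mul c).deriv.trans (by ring)

lemma deriv_mul_sin_const_mul (k x : ℝ) :
    deriv (fun t => t * sin (k * t)) x = sin (k * x) + k * x * cos (k * x) :=
  ((hasDerivAt_id' x).mul ((hasDerivAt_id' x).const_mul k).sin).deriv.trans (by ring)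

lemma deriv_mul_cos_const_mul (k x : ℝ) :
    deriv (fun t => t * cos (k * t)) x = cos (k * x) - k * x * sin (k * x) :=
  ((hasDerivAt_id' x).mul ((hasDerivAt_id' x).const_mul k).cos).deriv.trans (by ring)

/-- For `φ₁(a,b) = b·cos(ab)`, `φ₂(a,b) = b·sin(ab)` one has
`∂ₐφ₂·∂bφ₁ − ∂ₐφ₁·∂bφ₂ = b²` and `φ₁² + φ₂² = b²`, i.e. `φ = (φ₁,φ₂)` is a Poisson
map onto `(ℝ², {x,y} = x² + y²)`. -/
theorem phi_poisson_map (a b : ℝ) :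
    deriv (fun a' => b * Real.sin (a' * b)) a *
          deriv (fun b' => b' * Real.cos (a * b')) b -
        deriv (fun a' => b * Real.cos (a' * b)) a *
          deriv (fun b' => b' * Real.sin (a * b')) b = b ^ 2 ∧
      (b * Real.cos (a * b)) ^ 2 + (b * Real.sin (a * b)) ^ 2 = b ^ 2 := by
  rw [deriv_const_mul_sin_mul_const, deriv_mul_cos_const_mul, deriv_const_mul_cos_mul_const,
    deriv_mul_sin_const_mul]
  constructor
  · linear_combination b ^ 2 * sin_sq_add_cos_sq (a * b)
  · linear_combination b ^ 2 * cos_sq_add_sin_sq (a * b)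
end

section
/- Let φ : ℝ × ℝ → ℂ, φ(a,b) = (b : ℂ)·exp(Complex.I·a·b). For every (a,b) ∈ ℝ × ℝ with b ≠ 0, the Fréchet derivative of φ at (a,b) exists and is a linear isomorphism from ℝ × ℝ onto ℂ (as real vector spaces); in particular, φ is a local homeomorphism (local diffeomorphism) at every point (a,b) with b ≠ 0. -/
/-- The resolving map `φ(a,b) = b·exp(i·a·b)` of the paper. -/
noncomputable def phiMap (p : ℝ × ℝ) : ℂ :=
  (p.2 : ℂ) * Complex.exp (Complex.I * (p.1 : ℂ) * (p.2 : ℂ))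

/-!
The derivative of `φ` at `(a, b)` is `(u, v) ↦ u α + v β` with `α = i b² e^{iab}` and
`β = (1 + iab) e^{iab}`. Since `Im (conj α * β) = -b² |e^{iab}|² ≠ 0`, the vectors `α`, `β` are
`ℝ`-linearly independent, so this map is injective, hence an isomorphism `ℝ × ℝ ≃ ℂ` by dimension
count.
-/

open Complex ComplexConjugate ContinuousLinearMap

noncomputable def pairCombination (α β : ℂ) : ℝ × ℝ →L[ℝ] ℂ :=
  (toSpanSingleton ℝ α).coprod (toSpanSingleton ℝ β)

@[simp]
theorem pairCombination_apply (α β : ℂ) (x : ℝ × ℝ) :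
    pairCombination α β x = x.1 * α + x.2 * β := by
  simp [pairCombination, Complex.real_smul]

theorem pairCombination_injective {α β : ℂ} (h : (conj α * β).im ≠ 0) :
    Function.Injective (pairCombination α β) := by
  rw [injective_iff_map_eq_zero]
  rintro ⟨u, v⟩ huv
  have hα : α ≠ 0 := by rintro rfl; simp at h
  -- multiplying by `conj α` makes the coefficient of `u` real
  have hv : v * (conj α * β).im = 0 := by
    have := congrArg (fun z => (conj α * z).im) huv
    simp only [pairCombination_apply, mul_im, mul_re, add_im, add_re, conj_re, conj_im,
      ofReal_re, ofReal_im, zero_re, zero_im] at this ⊢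
    linear_combination this
  obtain rfl : v = 0 := (mul_eq_zero.1 hv).resolve_right h
  simpa [hα] using huv

theorem exists_continuousLinearEquiv_eq_pairCombination {α β : ℂ} (h : (conj α * β).im ≠ 0) :
    ∃ L : (ℝ × ℝ) ≃L[ℝ] ℂ, (L : (ℝ × ℝ) →L[ℝ] ℂ) = pairCombination α β := by
  have hdim : Module.finrank ℝ (ℝ × ℝ) = Module.finrank ℝ ℂ := by
    simp [Complex.finrank_real_complex]
  exact ⟨((pairCombination α β : (ℝ × ℝ) →ₗ[ℝ] ℂ).linearEquivOfInjective
    (pairCombination_injective h) hdim).toContinuousLinearEquiv, rfl⟩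

theorem hasFDerivAt_phiMap (p : ℝ × ℝ) :
    HasFDerivAt phiMap
      (pairCombination (I * p.2 ^ 2 * exp (I * p.1 * p.2))
        ((1 + I * p.1 * p.2) * exp (I * p.1 * p.2))) p := by
  have hfst : HasFDerivAt (fun q : ℝ × ℝ => (q.1 : ℂ)) (ofRealCLM.comp (fst ℝ ℝ ℝ)) p :=
    ofRealCLM.hasFDerivAt.comp p hasFDerivAt_fst
  have hsnd : HasFDerivAt (fun q : ℝ × ℝ => (q.2 : ℂ)) (ofRealCLM.comp (snd ℝ ℝ ℝ)) p :=
    ofRealCLM.hasFDerivAt.comp p hasFDerivAt_snd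
  refine (hsnd.mul (((hfst.const_mul I).mul hsnd).cexp)).congr_fderiv ?_
  ext <;> simp <;> ring

theorem im_conj_mul_one_add_I_mul_eq (a b : ℝ) (E : ℂ) :
    (conj (I * b ^ 2 * E) * ((1 + I * a * b) * E)).im = -(b ^ 2 * normSq E) := by
  simp [mul_im, mul_re, normSq_apply, ← ofReal_pow]; ring

/-- At every point `(a,b)` with `b ≠ 0`, the Fréchet derivative of `φ` exists and is a
(continuous) real-linear isomorphism from `ℝ × ℝ` onto `ℂ`; hence `φ` is étale there. -/
theorem phiMap_etale (p : ℝ × ℝ) (hp : p.2 ≠ 0) :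
    ∃ L : (ℝ × ℝ) ≃L[ℝ] ℂ, HasFDerivAt phiMap (L : (ℝ × ℝ) →L[ℝ] ℂ) p := by
  have hdet : (conj (I * p.2 ^ 2 * exp (I * p.1 * p.2)) *
      ((1 + I * p.1 * p.2) * exp (I * p.1 * p.2))).im ≠ 0 := by
    rw [im_conj_mul_one_add_I_mul_eq, neg_ne_zero]
    exact mul_ne_zero (pow_ne_zero 2 hp) (normSq_pos.2 (exp_ne_zero _)).ne'
  obtain ⟨L, hL⟩ := exists_continuousLinearEquiv_eq_pairCombination hdet
  exact ⟨L, hL ▸ hasFDerivAt_phiMap p⟩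
end

section
/- For all a, b ∈ ℝ with b ≠ 0 and all n ∈ ℤ: ((−1)ⁿ·b : ℂ)·exp(Complex.I·((−1)ⁿ·a + n·π/b)·((−1)ⁿ·b)) = (b : ℂ)·exp(Complex.I·a·b). In other words, φ ∘ T_n = φ on {b ≠ 0}, where φ(a,b) = b·exp(i·a·b) and T_n(a,b) = ((−1)ⁿa + nπ/b, (−1)ⁿb); hence φ descends to a well-defined map φ₁ on the quotient ℝ²/∼₁′, and the projection Π is a morphism of resolutions. -/
/-!
Under `T_n` the phase `a·b` becomes `a·b + (−1)ⁿ·nπ`, so the exponential picks up the factor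
`exp(±nπi) = (−1)ⁿ`, which cancels the sign `(−1)ⁿ` in front of `b`.
-/

open Complex

theorem neg_one_zpow_mul_self {K : Type*} [Field K] (n : ℤ) : (-1 : K) ^ n * (-1) ^ n = 1 := by
  rw [← mul_zpow, neg_one_mul, neg_neg, one_zpow]

theorem Complex.exp_int_mul_pi_mul_I (m : ℤ) : exp (m * (Real.pi * I)) = (-1) ^ m := by
  rw [exp_int_mul, exp_pi_mul_I]

theorem Complex.exp_neg_one_zpow_mul_int_mul_pi_mul_I (n : ℤ) :
    exp ((-1) ^ n * n * (Real.pi * I)) = (-1) ^ n := by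
  rcases Int.even_or_odd n with hn | hn
  · rw [hn.neg_one_zpow, one_mul, exp_int_mul_pi_mul_I, hn.neg_one_zpow]
  · rw [hn.neg_one_zpow, neg_one_mul, ← Int.cast_neg, exp_int_mul_pi_mul_I, hn.neg.neg_one_zpow]

theorem mul_add_div_mul_mul_of_mul_self_eq_one {K : Type*} [Field K] {ε b : K}
    (hε : ε * ε = 1) (hb : b ≠ 0) (a c : K) :
    (ε * a + c / b) * (ε * b) = a * b + ε * c := by
  field_simp
  linear_combination (a * b) * hε

/-- On `{b ≠ 0}` one has `φ ∘ T_n = φ`, where `φ(a,b) = b·exp(i·a·b)` and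
`T_n(a,b) = ((−1)ⁿa + nπ/b, (−1)ⁿb)`. -/
theorem phi_comp_Tn (a b : ℝ) (hb : b ≠ 0) (n : ℤ) :
    ((((-1 : ℝ) ^ n * b : ℝ)) : ℂ) *
        Complex.exp (Complex.I * (((-1 : ℝ) ^ n * a + n * Real.pi / b : ℝ) : ℂ) *
          (((-1 : ℝ) ^ n * b : ℝ) : ℂ)) =
      (b : ℂ) * Complex.exp (Complex.I * (a : ℂ) * (b : ℂ)) := by
  have hphase :
      I * (((-1 : ℝ) ^ n * a + n * Real.pi / b : ℝ) : ℂ) *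
          (((-1 : ℝ) ^ n * b : ℝ) : ℂ) = I * a * b + (-1) ^ n * n * (Real.pi * I) := by
    rw [mul_assoc, ← ofReal_mul,
      mul_add_div_mul_mul_of_mul_self_eq_one (neg_one_zpow_mul_self n) hb]
    push_cast
    ring
  rw [hphase, Complex.exp_add, exp_neg_one_zpow_mul_int_mul_pi_mul_I]
  push_cast
  linear_combination (b * exp (I * a * b)) * neg_one_zpow_mul_self (K := ℂ) n
end

section
/- Let α ∈ ℝ, Z ∈ ℂ and λ ∈ ℝ with λ ≠ 0. Then (λ : ℂ)·exp(Z·λ) belongs to the real line L_α = {(r : ℂ)·exp(Complex.I·α) : r ∈ ℝ} if and only if there exists n ∈ ℤ with λ·Im(Z) − α = n·π. -/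
/-! Rotating by `e^{-iα}`, `λ·exp(Zλ)` lies on `L_α` iff `λ·exp(Zλ - iα)` is real, and the
imaginary part of the latter is `λ·e^{λ Re Z}·sin(λ Im Z - α)`, which vanishes iff the sine does. -/

open Complex

theorem exists_ofReal_mul_exp_I_mul_iff_im_eq_zero (w : ℂ) (α : ℝ) :
    (∃ r : ℝ, w = r * exp (I * α)) ↔ (w * exp (-(I * α))).im = 0 := by
  have hrot : ∀ r : ℝ, w = r * exp (I * α) ↔ w * exp (-(I * α)) = r := fun r => by
    rw [exp_neg, ← div_eq_mul_inv, div_eq_iff (exp_ne_zero _)]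
  simp only [hrot]
  exact ⟨fun ⟨r, hr⟩ => hr ▸ ofReal_im r, fun h => ⟨_, Complex.ext rfl h⟩⟩

theorem exists_ofReal_mul_exp_eq_iff_sin_eq_zero {ρ : ℝ} (hρ : ρ ≠ 0) (z : ℂ) (α : ℝ) :
    (∃ r : ℝ, ρ * exp z = r * exp (I * α)) ↔ Real.sin (z.im - α) = 0 := by
  have him : (ρ * exp z * exp (-(I * α))).im = ρ * (Real.exp z.re * Real.sin (z.im - α)) := by
    rw [mul_assoc, ← exp_add, im_ofReal_mul, exp_im]
    simp [sub_eq_add_neg]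
  rw [exists_ofReal_mul_exp_I_mul_iff_im_eq_zero, him, mul_eq_zero, mul_eq_zero]
  simp [hρ, Real.exp_ne_zero]

/-- For `λ ≠ 0` real, `λ·exp(Z·λ)` lies on the line `L_α = e^{iα}·ℝ` if and only if
`λ·Im(Z) − α ∈ π·ℤ`. -/
theorem target_mem_line_iff (α : ℝ) (Z : ℂ) (lam : ℝ) (hlam : lam ≠ 0) :
    ((lam : ℂ) * Complex.exp (Z * (lam : ℂ)) ∈
        {w : ℂ | ∃ r : ℝ, w = (r : ℂ) * Complex.exp (Complex.I * (α : ℂ))}) ↔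
      ∃ n : ℤ, lam * Z.im - α = n * Real.pi := by
  have him : (Z * (lam : ℂ)).im = lam * Z.im := by simp [mul_comm]
  rw [Set.mem_ofPred_eq, exists_ofReal_mul_exp_eq_iff_sin_eq_zero hlam, him,
    Real.sin_eq_zero_iff]
  exact exists_congr fun n => eq_comm
end

section
/- Let α ∈ ℝ with α ∉ π·ℤ (i.e. there is no n ∈ ℤ with α = nπ). Let A = {(Z, λ) ∈ ℂ × ℝ : λ ≠ 0 and ∃ n ∈ ℤ, λ·Im(Z) − α = n·π}. Then the closure of A in ℂ × ℝ is disjoint from ℂ × {0}; equivalently, there are no sequences (Z_k) in ℂ and (λ_k) in ℝ∖{0} with (Z_k) convergent, λ_k → 0, and λ_k·Im(Z_k) − α ∈ π·ℤ for all k. -/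
/-! The map `(Z, λ) ↦ λ·Im Z − α` is continuous and sends the set into the closed set `π·ℤ`,
so it sends the closure into `π·ℤ` as well; but it takes the value `−α ∉ π·ℤ` on `ℂ × {0}`. -/

open Set

lemma Real.isClosed_setOf_exists_int_mul (c : ℝ) : IsClosed {x : ℝ | ∃ n : ℤ, x = n * c} := by
  rcases eq_or_ne c 0 with rfl | hc
  · simpa only [mul_zero, exists_const, ofPred_eq_eq_singleton] using
      isClosed_singleton (x := (0 : ℝ))
  · have : {x : ℝ | ∃ n : ℤ, x = n * c} = (· / c) ⁻¹' range ((↑) : ℤ → ℝ) := by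
      ext x
      simp only [mem_ofPred_eq, mem_preimage, mem_range, eq_div_iff hc, eq_comm]
    rw [this]
    exact Real.isClosed_range_intCast.preimage (continuous_id.div_const c)

/-- If `α ∉ π·ℤ`, the closure of
`A = {(Z,λ) : λ ≠ 0, λ·Im(Z) − α ∈ π·ℤ}` in `ℂ × ℝ` does not meet `ℂ × {0}`. -/
theorem closure_A_misses_zero_fiber (α : ℝ) (hα : ¬∃ n : ℤ, α = n * Real.pi) :
    closure {p : ℂ × ℝ | p.2 ≠ 0 ∧ ∃ n : ℤ, p.2 * p.1.im - α = n * Real.pi} ∩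
        {p : ℂ × ℝ | p.2 = 0} = ∅ := by
  set f : ℂ × ℝ → ℝ := fun p ↦ p.2 * p.1.im - α
  have hf : Continuous f := by fun_prop
  have hclosure : closure {p : ℂ × ℝ | p.2 ≠ 0 ∧ ∃ n : ℤ, p.2 * p.1.im - α = n * Real.pi} ⊆
      f ⁻¹' {x | ∃ n : ℤ, x = n * Real.pi} :=
    closure_minimal (fun p hp ↦ hp.2)
      ((Real.isClosed_setOf_exists_int_mul Real.pi).preimage hf)
  refine eq_empty_of_forall_notMem fun p ⟨hp, hp0⟩ ↦ ?_
  obtain ⟨n, hn⟩ := hclosure hp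
  simp only [f, show p.2 = 0 from hp0, zero_mul, zero_sub] at hn
  exact hα ⟨-n, by push_cast; linarith⟩
end
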